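/- Let q : [0,1] → ℝ be continuously differentiable, nonincreasing, with q(0) = 1, and suppose q(t) ≥ e^(-t) for all t ∈ [0,1]. Let b ≥ 0 and α(t) = 1 - e^(t-1). Then ∫₀¹ q(t)·(1 - α(t))·b dt - ∫₀¹ q'(t)·α(t)·b dt ≥ (1 - 1/e)·b. -/

import Mathlib

/-!
Since `1 - α = -α'` and `α 1 = 0`, integrating `q' * α` by parts turns the left-hand side into
`q 0 * α 0 * b = (1 - 1/e) * b`, so the bound holds with equality.
-/

open Real Set intervalIntegral MeasureTheory

theorem integral_mul_neg_deriv_sub_integral_deriv_mul {a b : ℝ} {u u' v v' : ℝ → ℝ}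
    (hu : ∀ x ∈ uIcc a b, HasDerivAt u (u' x) x) (hv : ∀ x ∈ uIcc a b, HasDerivAt v (v' x) x)
    (hu' : IntervalIntegrable u' volume a b) (hv' : IntervalIntegrable v' volume a b)
    (hvb : v b = 0) :
    (∫ x in a..b, u x * -v' x) - ∫ x in a..b, u' x * v x = u a * v a := by
  have hparts := integral_mul_deriv_eq_deriv_mul hu hv hu' hv'
  simp only [mul_neg, intervalIntegral.integral_neg, hvb, mul_zero, zero_sub] at hparts ⊢
  linarith

theorem hasDerivAt_one_sub_exp_sub_one (t : ℝ) :
    HasDerivAt (fun t => 1 - exp (t - 1)) (-exp (t - 1)) t := by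
  simpa using (((hasDerivAt_id t).sub_const 1).exp).const_sub 1

theorem single_item_welfare_bound_general (q q' : ℝ → ℝ)
    (hderiv : ∀ t ∈ Set.Icc (0:ℝ) 1, HasDerivAt q (q' t) t)
    (hcont : ContinuousOn q' (Set.Icc (0:ℝ) 1))
    (hq0 : q 0 = 1)
    (b : ℝ)
    (α : ℝ → ℝ) (hα : α = fun t => 1 - Real.exp (t - 1)) :
    (∫ t in (0:ℝ)..1, q t * (1 - α t) * b) - (∫ t in (0:ℝ)..1, q' t * α t * b)
      ≥ (1 - 1 / Real.exp 1) * b := by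
  subst hα
  have hIcc : uIcc (0:ℝ) 1 = Icc 0 1 := uIcc_of_le zero_le_one
  have hresidual := integral_mul_neg_deriv_sub_integral_deriv_mul (hIcc ▸ hderiv)
    (fun t _ => hasDerivAt_one_sub_exp_sub_one t) (hcont.intervalIntegrable_of_Icc zero_le_one)
    ((by fun_prop : Continuous fun t => -exp (t - 1)).intervalIntegrable 0 1) (by simp)
  rw [hq0, one_mul, zero_sub, exp_neg, ← one_div] at hresidual
  simp only [neg_neg, sub_sub_cancel, intervalIntegral.integral_mul_const, ← sub_mul] at hresidual ⊢
  rw [hresidual]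

theorem single_item_welfare_bound (q q' : ℝ → ℝ)
    (hderiv : ∀ t ∈ Set.Icc (0:ℝ) 1, HasDerivAt q (q' t) t)
    (hcont : ContinuousOn q' (Set.Icc (0:ℝ) 1))
    (hmono : ∀ s ∈ Set.Icc (0:ℝ) 1, ∀ t ∈ Set.Icc (0:ℝ) 1, s ≤ t → q t ≤ q s)
    (hq0 : q 0 = 1)
    (hq : ∀ t ∈ Set.Icc (0:ℝ) 1, q t ≥ Real.exp (-t))
    (b : ℝ) (hb : 0 ≤ b)
    (α : ℝ → ℝ) (hα : α = fun t => 1 - Real.exp (t - 1)) :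
    (∫ t in (0:ℝ)..1, q t * (1 - α t) * b) - (∫ t in (0:ℝ)..1, q' t * α t * b)
      ≥ (1 - 1 / Real.exp 1) * b :=
  single_item_welfare_bound_general q q' hderiv hcont hq0 b α hα
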